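/- arXiv:2404.04464 — 3 statements merged into one kernel-verified Lean document; each statement's English description precedes it below -/
import Mathlib

section
/- Let (x_n)_{n∈I} be a frame for H with canonical dual (y_n)_{n∈I}, and E = {1,...,k} ⊊ I a finite set satisfying the MRC for (x_n). Then the k×k matrix A_E with entries (A_E)_{mi} = ⟨y_i, x_m⟩ − δ_{mi} is invertible. -/
/-! If `A_E c = 0`, then `f = ∑ᵢ cᵢ yᵢ` satisfies `⟨f, x_m⟩ = c_m` for `m ∈ E`, so
`S f = ∑ᵢ cᵢ xᵢ` is the part over `E` of the frame expansion `S f = ∑_{n ∈ I} ⟨f, x_n⟩ x_n`.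
Hence `∑_{n ∈ I \ E} ⟨f, x_n⟩ x_n = 0`; pairing with `f` gives `∑_{n ∈ I \ E} |⟨f, x_n⟩|² = 0`,
so `f` is orthogonal to every `x_n` with `n ∈ I \ E`, and the MRC forces `f = 0`, i.e. `c = 0`. -/

noncomputable section

variable {H : Type*} [NormedAddCommGroup H] [InnerProductSpace ℂ H] [CompleteSpace H]

/-- `(x n)_{n ∈ I}` is a frame for `H` with frame bounds `A`, `B`. -/
def IsFrameOn (x : ℕ → H) (I : Set ℕ) (A B : ℝ) : Prop :=
  0 < A ∧ 0 < B ∧ ∀ h : H,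
    Summable (fun n : I => ‖(inner ℂ (x n) h : ℂ)‖ ^ 2) ∧
    A * ‖h‖ ^ 2 ≤ ∑' n : I, ‖(inner ℂ (x n) h : ℂ)‖ ^ 2 ∧
    ∑' n : I, ‖(inner ℂ (x n) h : ℂ)‖ ^ 2 ≤ B * ‖h‖ ^ 2

/-- `(y n)_{n ∈ I}` is the canonical dual of `(x n)_{n ∈ I}`. -/
def IsCanonicalDualOn (y x : ℕ → H) (I : Set ℕ) : Prop :=
  ∃ S Sinv : H →L[ℂ] H,
    (∀ h : H, HasSum (fun n : I => (inner ℂ (x n) h : ℂ) • x n) (S h)) ∧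
    Sinv.comp S = ContinuousLinearMap.id ℂ H ∧
    S.comp Sinv = ContinuousLinearMap.id ℂ H ∧
    ∀ n ∈ I, y n = Sinv (x n)

open Finset Submodule

theorem Finset.sum_fin_add_one_eq_sum_Icc {M : Type*} [AddCommMonoid M] (g : ℕ → M) (k : ℕ) :
    ∑ i : Fin k, g (i + 1) = ∑ n ∈ Icc 1 k, g n := by
  rw [Fin.sum_univ_eq_sum_range (fun i => g (i + 1)), range_eq_Ico, sum_Ico_add', zero_add,
    Ico_add_one_right_eq_Icc]

section InnerProductSpace

variable {𝕜 E ι : Type*} [RCLike 𝕜] [NormedAddCommGroup E] [InnerProductSpace 𝕜 E]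

theorem inner_eq_zero_of_hasSum_inner_smul_eq_zero {v : ι → E} {f : E}
    (h : HasSum (fun n => inner 𝕜 (v n) f • v n) 0) (n : ι) : inner 𝕜 (v n) f = 0 := by
  have hnorm : HasSum (fun n => ‖inner 𝕜 (v n) f‖ ^ 2) 0 := by
    rw [← RCLike.hasSum_ofReal 𝕜]
    convert h.mapL (innerSL 𝕜 f) using 1
    · ext n
      rw [innerSL_apply_apply, inner_smul_right, ← inner_conj_symm f (v n), RCLike.mul_conj]
      norm_cast
    · simp
  simpa using congrFun ((hasSum_zero_iff_of_nonneg fun n => sq_nonneg _).1 hnorm) n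

theorem eq_zero_of_dense_span_of_inner_eq_zero {s : Set E} (hs : Dense (span 𝕜 s : Set E))
    {f : E} (h : ∀ v ∈ s, inner 𝕜 v f = 0) : f = 0 := by
  have hortho : span 𝕜 s ⟂ span 𝕜 {f} :=
    isOrtho_span.2 fun u hu w hw => by rw [Set.mem_singleton_iff.1 hw]; exact h u hu
  exact hs.eq_zero_of_inner_right 𝕜 fun v hv => hortho.inner_eq hv (mem_span_singleton_self f)

theorem eq_zero_of_hasSum_inner_smul_eq_sum_finset {α : Type*} {x : α → E} {I : Set α}
    {F : Finset α} (hFI : ↑F ⊆ I) (hdense : Dense (span 𝕜 (x '' (I \ F)) : Set E)) {f : E}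
    (hf : HasSum (fun n : I => inner 𝕜 (x n) f • x n) (∑ n ∈ F, inner 𝕜 (x n) f • x n)) :
    f = 0 := by
  classical
  have hF : ∑ n ∈ F.subtype (· ∈ I), inner 𝕜 (x n) f • x n =
      ∑ n ∈ F, inner 𝕜 (x n) f • x n :=
    sum_subtype_of_mem (fun n => inner 𝕜 (x n) f • x n) hFI
  have hcompl : HasSum (fun n : {n : I // n ∉ F.subtype (· ∈ I)} =>
      inner 𝕜 (x n) f • x n) 0 :=
    (Finset.hasSum_compl_iff (f := fun n : I => inner 𝕜 (x n) f • x n) _).2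
      (by rwa [zero_add, hF])
  refine eq_zero_of_dense_span_of_inner_eq_zero hdense ?_
  rintro _ ⟨n, ⟨hnI, hnF⟩, rfl⟩
  exact inner_eq_zero_of_hasSum_inner_smul_eq_zero hcompl ⟨⟨n, hnI⟩, by simpa using hnF⟩

end InnerProductSpace

theorem IsCanonicalDualOn.exists_frameOperator {E : Type*} [NormedAddCommGroup E]
    [InnerProductSpace ℂ E] {x y : ℕ → E} {I : Set ℕ} (hy : IsCanonicalDualOn y x I) :
    ∃ S : E →L[ℂ] E, (∀ h, HasSum (fun n : I => inner ℂ (x n) h • x n) (S h)) ∧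
      ∀ n ∈ I, S (y n) = x n := by
  obtain ⟨S, Sinv, hS, -, hSSinv, hyx⟩ := hy
  exact ⟨S, hS, fun n hn => by rw [hyx n hn, ← ContinuousLinearMap.comp_apply, hSSinv]; rfl⟩

-- `⟨a, b⟩` in the paper is linear in `a`, so its `⟨y i, x m⟩` is `inner ℂ (x m) (y i)` here.
theorem stmt5_general (x y : ℕ → H) (I : Set ℕ)
    (hy : IsCanonicalDualOn y x I) (k : ℕ)
    (hE : ((Finset.Icc 1 k : Finset ℕ) : Set ℕ) ⊂ I)
    (hMRC : Dense ((Submodule.span ℂ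
      (x '' (I \ (Finset.Icc 1 k : Finset ℕ))) : Submodule ℂ H) : Set H)) :
    IsUnit (Matrix.of (fun m i : Fin k =>
      (inner ℂ (x ((m : ℕ) + 1)) (y ((i : ℕ) + 1)) : ℂ) - if m = i then 1 else 0)) := by
  obtain ⟨S, hS, hSy⟩ := hy.exists_frameOperator
  rw [← Matrix.mulVec_injective_iff_isUnit, ← Matrix.coe_mulVecLin, injective_iff_map_eq_zero]
  intro c hc
  set f := ∑ i : Fin k, c i • y (i + 1)
  have hxf : ∀ m : Fin k, inner ℂ (x (m + 1)) f = c m := fun m => by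
    have hcm := congrFun hc m
    simp only [Matrix.mulVecLin_apply, Matrix.mulVec, dotProduct, Matrix.of_apply, sub_mul,
      ite_mul, one_mul, zero_mul, sum_sub_distrib, sum_ite_eq, mem_univ, if_true,
      Pi.zero_apply, sub_eq_zero] at hcm
    rw [inner_sum, ← hcm]
    exact sum_congr rfl fun i _ => by rw [inner_smul_right, mul_comm]
  have hIcc : ∀ i : Fin k, (i : ℕ) + 1 ∈ Icc 1 k := fun i => mem_Icc.2 ⟨le_add_self, i.is_lt⟩
  have hSf : S f = ∑ n ∈ Icc 1 k, inner ℂ (x n) f • x n := by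
    rw [← sum_fin_add_one_eq_sum_Icc (fun n => inner ℂ (x n) f • x n)]
    simp only [hxf, f, map_sum, map_smul, fun i => hSy _ (hE.subset (hIcc i))]
  have hf : f = 0 := eq_zero_of_hasSum_inner_smul_eq_sum_finset hE.subset hMRC (hSf ▸ hS f)
  funext m
  rw [← hxf m, hf, inner_zero_right]
  rfl

/-- For a frame `(x n)_{n ∈ I}` with canonical dual `(y n)` and a set
`E = {1,…,k} ⊊ I` satisfying the MRC, the `k×k` matrix with entries
`⟨y i, x m⟩ − δ_{m i}` is invertible.  (Here `⟨a, b⟩` denotes the inner product,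
linear in the first argument, so `⟨y i, x m⟩ = ⟪x m, y i⟫` in Mathlib's convention.) -/
theorem stmt5 (x y : ℕ → H) (I : Set ℕ) (A B : ℝ) (hx : IsFrameOn x I A B)
    (hy : IsCanonicalDualOn y x I) (k : ℕ)
    (hE : ((Finset.Icc 1 k : Finset ℕ) : Set ℕ) ⊂ I)
    (hMRC : Dense ((Submodule.span ℂ
      (x '' (I \ (Finset.Icc 1 k : Finset ℕ))) : Submodule ℂ H) : Set H)) :
    IsUnit (Matrix.of (fun m i : Fin k =>
      (inner ℂ (x ((m : ℕ) + 1)) (y ((i : ℕ) + 1)) : ℂ) - if m = i then 1 else 0)) :=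
  stmt5_general x y I hy k hE hMRC

end
end

section
/- Let (x_n)_{n∈I} be a frame for H and (z_n)_{n∈I} a dual frame of (x_n) such that ⟨z_1, x_1⟩ ≠ 1. Then the sequence v_n = z_n + (⟨z_n, x_1⟩ / (1 − ⟨z_1, x_1⟩)) z_1, n ≥ 2, is a dual frame of (x_n)_{n≥2}; in particular x = Σ_{n≥2} ⟨x, x_n⟩ v_n for all x ∈ H. -/
/-!
Dropping the term `n = 1` from `h = Σ ⟪x n, h⟫ z n` loses `⟪x 1, h⟫ z 1`. Pairing the truncated
sum with `x 1` gives `Σ_{n ≠ 1} ⟪x n, h⟫ ⟪x 1, z n⟫ = ⟪x 1, h⟫ (1 - ⟪x 1, z 1⟫)`, so after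
division by `1 - ⟪x 1, z 1⟫` the correction along `z 1` restores exactly the lost term.
The corrected sequence is Bessel as a sum of two Bessel sequences, and a Bessel sequence that
reconstructs against a Bessel sequence with bound `B` is a frame with lower bound `1 / B`
(Cauchy–Schwarz in the form of a weighted AM–GM inequality).
-/

noncomputable section

variable {H : Type*} [NormedAddCommGroup H] [InnerProductSpace ℂ H] [CompleteSpace H]

/-- `(z n)_{n ∈ I}` is a dual frame of `(x n)_{n ∈ I}`. -/
def IsDualFrameOn (z x : ℕ → H) (I : Set ℕ) : Prop :=
  (∃ A B : ℝ, IsFrameOn z I A B) ∧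
  ∀ h : H, HasSum (fun n : I => (inner ℂ (x n) h : ℂ) • z n) h

open scoped InnerProductSpace

theorem HasSum.subtype_sdiff_singleton {α E : Type*} [AddCommGroup E] [TopologicalSpace E]
    [IsTopologicalAddGroup E] {f : α → E} {I : Set α} {k : α} {a : E}
    (h : HasSum (fun n : I => f n) a) (hk : k ∈ I) :
    HasSum (fun n : (I \ {k} : Set α) => f n) (a - f k) := by
  classical
  rw [← Function.comp_def, hasSum_subtype_iff_indicator] at h ⊢
  rw [Set.indicator_sdiff (Set.singleton_subset_iff.mpr hk), Set.indicator_singleton]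
  exact h.sub (hasSum_pi_single k (f k))

section

variable {E : Type*} [NormedAddCommGroup E] [InnerProductSpace ℂ E]

def IsBesselOn (x : ℕ → E) (I : Set ℕ) (B : ℝ) : Prop :=
  ∀ h : E, Summable (fun n : I => ‖⟪x n, h⟫_ℂ‖ ^ 2) ∧ ∑' n : I, ‖⟪x n, h⟫_ℂ‖ ^ 2 ≤ B * ‖h‖ ^ 2

theorem IsFrameOn.isBesselOn {x : ℕ → E} {I : Set ℕ} {A B : ℝ} (hx : IsFrameOn x I A B) :
    IsBesselOn x I B :=
  fun h => ⟨(hx.2.2 h).1, (hx.2.2 h).2.2⟩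

namespace IsBesselOn

variable {x y : ℕ → E} {I : Set ℕ} {B B₁ B₂ : ℝ}

theorem mono {J : Set ℕ} (hJI : J ⊆ I) (hx : IsBesselOn x I B) : IsBesselOn x J B := by
  intro h
  obtain ⟨hsum, hle⟩ := hx h
  have hinj := Set.inclusion_injective hJI
  exact ⟨(hsum.comp_injective hinj :),
    (tsum_comp_le_tsum_of_inj hsum (fun _ => sq_nonneg _) hinj).trans hle⟩

theorem add (hx : IsBesselOn x I B₁) (hy : IsBesselOn y I B₂) :
    IsBesselOn (fun n => x n + y n) I (2 * B₁ + 2 * B₂) := by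
  intro h
  obtain ⟨hx_sum, hx_le⟩ := hx h
  obtain ⟨hy_sum, hy_le⟩ := hy h
  have hdom : ∀ n : I, ‖⟪x n + y n, h⟫_ℂ‖ ^ 2 ≤
      2 * ‖⟪x n, h⟫_ℂ‖ ^ 2 + 2 * ‖⟪y n, h⟫_ℂ‖ ^ 2 := fun n =>
    calc ‖⟪x n + y n, h⟫_ℂ‖ ^ 2 ≤ (‖⟪x n, h⟫_ℂ‖ + ‖⟪y n, h⟫_ℂ‖) ^ 2 := by
          rw [inner_add_left]; gcongr; exact norm_add_le _ _
      _ ≤ _ := by linarith [add_sq_le (a := ‖⟪x n, h⟫_ℂ‖) (b := ‖⟪y n, h⟫_ℂ‖)]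
  have hsum := (hx_sum.mul_left 2).add (hy_sum.mul_left 2)
  refine ⟨hsum.of_nonneg_of_le (fun _ => sq_nonneg _) hdom, ?_⟩
  calc ∑' n : I, ‖⟪x n + y n, h⟫_ℂ‖ ^ 2
      ≤ ∑' n : I, (2 * ‖⟪x n, h⟫_ℂ‖ ^ 2 + 2 * ‖⟪y n, h⟫_ℂ‖ ^ 2) :=
        (hsum.of_nonneg_of_le (fun _ => sq_nonneg _) hdom).tsum_le_tsum hdom hsum
    _ = 2 * ∑' n : I, ‖⟪x n, h⟫_ℂ‖ ^ 2 + 2 * ∑' n : I, ‖⟪y n, h⟫_ℂ‖ ^ 2 := by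
        rw [(hx_sum.mul_left 2).tsum_add (hy_sum.mul_left 2), tsum_mul_left, tsum_mul_left]
    _ ≤ (2 * B₁ + 2 * B₂) * ‖h‖ ^ 2 := by linarith

end IsBesselOn

theorem isBesselOn_smul_const {a : ℕ → ℂ} {I : Set ℕ} (ha : Summable (fun n : I => ‖a n‖ ^ 2))
    (w : E) : IsBesselOn (fun n => a n • w) I ((∑' n : I, ‖a n‖ ^ 2) * ‖w‖ ^ 2) := by
  intro h
  have hdom : ∀ n : I, ‖⟪a n • w, h⟫_ℂ‖ ^ 2 ≤ ‖a n‖ ^ 2 * (‖w‖ * ‖h‖) ^ 2 := fun n => by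
    rw [inner_smul_left, norm_mul, RCLike.norm_conj, mul_pow]
    gcongr
    exact norm_inner_le_norm w h
  have hsum := ha.mul_right ((‖w‖ * ‖h‖) ^ 2)
  refine ⟨hsum.of_nonneg_of_le (fun _ => sq_nonneg _) hdom, ?_⟩
  calc ∑' n : I, ‖⟪a n • w, h⟫_ℂ‖ ^ 2 ≤ ∑' n : I, ‖a n‖ ^ 2 * (‖w‖ * ‖h‖) ^ 2 :=
        (hsum.of_nonneg_of_le (fun _ => sq_nonneg _) hdom).tsum_le_tsum hdom hsum
    _ = (∑' n : I, ‖a n‖ ^ 2) * ‖w‖ ^ 2 * ‖h‖ ^ 2 := by rw [tsum_mul_right]; ring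

theorem IsBesselOn.summable_norm_inner_div_sq {z : ℕ → E} {I : Set ℕ} {B : ℝ}
    (hz : IsBesselOn z I B) (y : E) (c : ℂ) :
    Summable (fun n : I => ‖⟪y, z n⟫_ℂ / c‖ ^ 2) :=
  ((hz y).1.div_const (‖c‖ ^ 2)).congr fun n => by rw [norm_div, div_pow, norm_inner_symm]

theorem IsBesselOn.isFrameOn_of_hasSum {x v : ℕ → E} {I : Set ℕ} {B B' : ℝ}
    (hv : IsBesselOn v I B') (hx : IsBesselOn x I B) (hB : 0 < B) (hB' : 0 < B')
    (hrec : ∀ h, HasSum (fun n : I => ⟪x n, h⟫_ℂ • v n) h) :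
    IsFrameOn v I B⁻¹ B' := by
  refine ⟨inv_pos.mpr hB, hB', fun h => ⟨(hv h).1, ?_, (hv h).2⟩⟩
  obtain ⟨hx_sum, hx_le⟩ := hx h
  obtain ⟨hv_sum, -⟩ := hv h
  have hpair : HasSum (fun n : I => ⟪x n, h⟫_ℂ * ⟪h, v n⟫_ℂ) ⟪h, h⟫_ℂ := by
    simpa only [innerSL_apply_apply, inner_smul_right] using (hrec h).mapL (innerSL ℂ h)
  -- the weights `1 / (2B)` and `B / 2` make the `x`-part of the bound at most `‖h‖² / 2`
  have hamgm : ∀ n : I, ‖⟪x n, h⟫_ℂ * ⟪h, v n⟫_ℂ‖ ≤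
      (2 * B)⁻¹ * ‖⟪x n, h⟫_ℂ‖ ^ 2 + B / 2 * ‖⟪v n, h⟫_ℂ‖ ^ 2 := fun n => by
    rw [norm_mul, norm_inner_symm h]
    have := sq_nonneg (‖⟪x n, h⟫_ℂ‖ - B * ‖⟪v n, h⟫_ℂ‖)
    field_simp
    nlinarith
  have hnorm := tsum_of_norm_bounded
    ((hx_sum.mul_left (2 * B)⁻¹).add (hv_sum.mul_left (B / 2))).hasSum hamgm
  rw [hpair.tsum_eq, inner_self_eq_norm_sq_to_K, norm_pow, RCLike.norm_ofReal, abs_norm,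
    (hx_sum.mul_left _).tsum_add (hv_sum.mul_left _),
    tsum_mul_left, tsum_mul_left] at hnorm
  have hx_le' := mul_le_mul_of_nonneg_left hx_le (inv_nonneg.mpr (mul_pos two_pos hB).le)
  rw [inv_mul_le_iff₀ hB]
  field_simp at hx_le' hnorm
  nlinarith

theorem hasSum_inner_smul_erasure {x z : ℕ → E} {I : Set ℕ} {k : ℕ}
    (hrec : ∀ h, HasSum (fun n : I => ⟪x n, h⟫_ℂ • z n) h) (hk : k ∈ I)
    (hne : ⟪x k, z k⟫_ℂ ≠ 1) (h : E) :
    HasSum (fun n : (I \ {k} : Set ℕ) =>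
      ⟪x n, h⟫_ℂ • (z n + (⟪x k, z n⟫_ℂ / (1 - ⟪x k, z k⟫_ℂ)) • z k)) h := by
  have htrunc := (hrec h).subtype_sdiff_singleton (f := fun n => ⟪x n, h⟫_ℂ • z n) hk
  have hpair : HasSum (fun n : (I \ {k} : Set ℕ) => ⟪x n, h⟫_ℂ * ⟪x k, z n⟫_ℂ)
      (⟪x k, h⟫_ℂ * (1 - ⟪x k, z k⟫_ℂ)) := by
    simpa only [innerSL_apply_apply, inner_smul_right, inner_sub_right, mul_one_sub]
      using htrunc.mapL (innerSL ℂ (x k))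
  have hcorr := (hpair.div_const (1 - ⟪x k, z k⟫_ℂ)).smul_const (z k)
  rw [mul_div_cancel_right₀ _ (sub_ne_zero.mpr hne.symm)] at hcorr
  convert htrunc.add hcorr using 1
  · ext n
    rw [smul_add, smul_smul, mul_div_assoc]
  · abel

end

/-- If `(z n)` is a dual frame of the frame `(x n)_{n ∈ I}` and `⟨z 1, x 1⟩ ≠ 1`, then
`v n = z n + (⟨z n, x 1⟩ / (1 − ⟨z 1, x 1⟩)) z 1`, `n ≥ 2`, is a dual frame of
`(x n)_{n ≥ 2}`; in particular `h = Σ_{n ∈ I, n ≥ 2} ⟨h, x n⟩ v n` for all `h ∈ H`. -/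
theorem stmt10 (x z : ℕ → H) (I : Set ℕ) (A B : ℝ) (hx : IsFrameOn x I A B)
    (hz : IsDualFrameOn z x I) (h1 : (1 : ℕ) ∈ I)
    (hne : (inner ℂ (x 1) (z 1) : ℂ) ≠ 1) :
    IsDualFrameOn
      (fun n => z n + ((inner ℂ (x 1) (z n) : ℂ) / (1 - (inner ℂ (x 1) (z 1) : ℂ))) • z 1)
      x (I \ {1}) ∧
    ∀ h : H, HasSum
      (fun n : (I \ {1} : Set ℕ) => (inner ℂ (x n) h : ℂ) •
        (z n + ((inner ℂ (x 1) (z n) : ℂ) / (1 - (inner ℂ (x 1) (z 1) : ℂ))) • z 1)) h := by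
  obtain ⟨⟨_, Bz, hz_frame⟩, hrec⟩ := hz
  have hv_rec := hasSum_inner_smul_erasure hrec h1 hne
  have hz_bessel : IsBesselOn z (I \ {1}) Bz := hz_frame.isBesselOn.mono Set.sdiff_subset
  have hv_bessel := hz_bessel.add <| isBesselOn_smul_const
    (a := fun n => ⟪x 1, z n⟫_ℂ / (1 - ⟪x 1, z 1⟫_ℂ))
    (hz_bessel.summable_norm_inner_div_sq (x 1) (1 - ⟪x 1, z 1⟫_ℂ)) (z 1)
  have hv_frame := hv_bessel.isFrameOn_of_hasSum (hx.isBesselOn.mono Set.sdiff_subset) hx.2.1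
    (by have := hz_frame.2.1; positivity) hv_rec
  exact ⟨⟨⟨_, _, hv_frame⟩, hv_rec⟩, hv_rec⟩

end
end

section
/- Let (e_n)_{n∈ℕ} be an orthonormal basis of H. Then the sequence X = (e_1, e_1, e_1, e_2, e_3, e_4, ...) is a frame for H, and Z = (e_1, −(1/2)e_1, (1/2)e_1, e_2, e_3, e_4, ...) is a dual frame of X; moreover ⟨z_1, x_1⟩ = 1, so the operator I − θ_{z_1,x_1} = I − θ_{e_1,e_1} is not invertible (e_1 lies in its kernel). -/
noncomputable section

variable {H : Type*} [NormedAddCommGroup H] [InnerProductSpace ℂ H] [CompleteSpace H]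

/-- The rank-one operator `θ_{y,x} : h ↦ ⟨h, x⟩ y`. -/
def rankOne (y x : H) : H →L[ℂ] H := (innerSL ℂ x).smulRight y

/-! Both `x` and `z` are the Hilbert basis with two vectors inserted after `e 0`. Hence their frame
sums are Parseval's identity plus two terms bounded by Cauchy–Schwarz, and the reconstruction
series is the basis expansion of `h` plus `⟨e 0, h⟩ (-½ + ½) e 0 = 0`. On the other hand
`⟨z 0, x 0⟩ = ‖e 0‖² = 1` puts `e 0` in the kernel of `I - θ_{z 0, x 0}`. -/

lemma HasSum.of_insert_two {G : Type*} [AddCommGroup G] [TopologicalSpace G]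
    [IsTopologicalAddGroup G] {f g : ℕ → G} {s : G} (hg : HasSum g s) (h0 : f 0 = g 0)
    (hf : ∀ n, 3 ≤ n → f n = g (n - 2)) :
    HasSum f (s + (f 1 + f 2)) := by
  have htail : HasSum (fun n => f (n + 3)) (s - g 0) := by
    have := (hasSum_nat_add_iff' 1).mpr hg
    rw [Finset.sum_range_one] at this
    convert this using 2 with n
    rw [hf _ (by omega), show n + 3 - 2 = n + 1 by omega]
  convert (hasSum_nat_add_iff 3).mp htail using 1
  simp only [Finset.sum_range_succ, Finset.sum_range_zero, h0]
  abel

lemma HilbertBasis.hasSum_norm_inner_sq {ι 𝕜 E : Type*} [RCLike 𝕜] [NormedAddCommGroup E]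
    [InnerProductSpace 𝕜 E] (e : HilbertBasis ι 𝕜 E) (h : E) :
    HasSum (fun i => ‖(inner 𝕜 (e i) h : 𝕜)‖ ^ 2) (‖h‖ ^ 2) := by
  have := e.hasSum_inner_mul_inner h h
  simp only [← inner_conj_symm h (e _), RCLike.conj_mul, inner_self_eq_norm_sq_to_K] at this
  exact_mod_cast this

section

variable {E : Type*} [NormedAddCommGroup E] [InnerProductSpace ℂ E]

lemma isFrameOn_univ_of_hasSum {x : ℕ → E} {A B : ℝ} (hA : 0 < A) (hB : 0 < B) (S : E → ℝ)
    (hS : ∀ h, HasSum (fun n => ‖(inner ℂ (x n) h : ℂ)‖ ^ 2) (S h))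
    (hlower : ∀ h, A * ‖h‖ ^ 2 ≤ S h) (hupper : ∀ h, S h ≤ B * ‖h‖ ^ 2) :
    IsFrameOn x Set.univ A B := by
  refine ⟨hA, hB, fun h => ?_⟩
  have hSu : HasSum (fun n : (Set.univ : Set ℕ) => ‖(inner ℂ (x n) h : ℂ)‖ ^ 2) (S h) :=
    (Equiv.Set.univ ℕ).hasSum_iff.mpr (hS h)
  exact ⟨hSu.summable, hSu.tsum_eq ▸ hlower h, hSu.tsum_eq ▸ hupper h⟩

variable (e : HilbertBasis ℕ ℂ E) {x z : ℕ → E}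

lemma isFrameOn_univ_of_hilbertBasis_insert_two (hx0 : x 0 = e 0)
    (hx : ∀ n, 3 ≤ n → x n = e (n - 2)) :
    IsFrameOn x Set.univ 1 (1 + ‖x 1‖ ^ 2 + ‖x 2‖ ^ 2) := by
  have hS (h : E) : HasSum (fun n => ‖(inner ℂ (x n) h : ℂ)‖ ^ 2)
      (‖h‖ ^ 2 + (‖(inner ℂ (x 1) h : ℂ)‖ ^ 2 + ‖(inner ℂ (x 2) h : ℂ)‖ ^ 2)) :=
    (e.hasSum_norm_inner_sq h).of_insert_two (by rw [hx0]) fun n hn => by rw [hx n hn]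
  have hcs (u h : E) : ‖(inner ℂ u h : ℂ)‖ ^ 2 ≤ ‖u‖ ^ 2 * ‖h‖ ^ 2 := by
    rw [← mul_pow]
    exact pow_le_pow_left₀ (norm_nonneg _) (norm_inner_le_norm u h) 2
  refine isFrameOn_univ_of_hasSum one_pos (by positivity) _ hS (fun h => ?_) (fun h => ?_)
  · rw [one_mul]
    exact le_add_of_nonneg_right (by positivity)
  · linarith [hcs (x 1) h, hcs (x 2) h]

lemma hasSum_inner_smul_of_hilbertBasis_insert_two (hx0 : x 0 = e 0) (hz0 : z 0 = e 0)
    (hx : ∀ n, 3 ≤ n → x n = e (n - 2)) (hz : ∀ n, 3 ≤ n → z n = e (n - 2)) (h : E) :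
    HasSum (fun n => (inner ℂ (x n) h : ℂ) • z n)
      (h + ((inner ℂ (x 1) h : ℂ) • z 1 + (inner ℂ (x 2) h : ℂ) • z 2)) := by
  have hrepr : HasSum (fun k => (inner ℂ (e k) h : ℂ) • e k) h := by
    simpa only [e.repr_apply_apply] using e.hasSum_repr h
  exact hrepr.of_insert_two (by rw [hx0, hz0]) fun n hn => by rw [hx n hn, hz n hn]

lemma rankOne_apply (y x h : E) : rankOne y x h = (inner ℂ x h : ℂ) • y := rfl

lemma id_sub_rankOne_self_apply_self {u : E} (hu : ‖u‖ = 1) :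
    (ContinuousLinearMap.id ℂ E - rankOne u u) u = 0 := by
  simp [rankOne_apply, hu]

lemma ContinuousLinearMap.not_exists_comp_eq_id_of_apply_eq_zero {R M N : Type*} [Semiring R]
    [TopologicalSpace M] [AddCommMonoid M] [Module R M] [TopologicalSpace N] [AddCommMonoid N]
    [Module R N] {T : M →L[R] N} {v : M} (hv : v ≠ 0) (hTv : T v = 0) :
    ¬∃ S : N →L[R] M, S.comp T = ContinuousLinearMap.id R M := by
  rintro ⟨S, hS⟩
  apply hv
  simpa [hTv] using (congrArg (· v) hS).symm

end

/-- Example: with `(e n)` an orthonormal basis (indexed from `0`),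
`X = (e 0, e 0, e 0, e 1, e 2, …)` is a frame, `Z = (e 0, −½ e 0, ½ e 0, e 1, e 2, …)`
is a dual frame of `X`, `⟨z 0, x 0⟩ = 1`, and `I − θ_{z 0, x 0} = I − θ_{e 0, e 0}`
is not invertible, since `e 0` lies in its kernel. -/
theorem stmt13 (e : HilbertBasis ℕ ℂ H) (x z : ℕ → H)
    (hx0 : x 0 = e 0) (hx1 : x 1 = e 0) (hx2 : x 2 = e 0)
    (hx : ∀ n, 3 ≤ n → x n = e (n - 2))
    (hz0 : z 0 = e 0) (hz1 : z 1 = -((1 : ℂ) / 2) • e 0) (hz2 : z 2 = ((1 : ℂ) / 2) • e 0)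
    (hz : ∀ n, 3 ≤ n → z n = e (n - 2)) :
    (∃ A B : ℝ, IsFrameOn x Set.univ A B) ∧
    IsDualFrameOn z x Set.univ ∧
    (inner ℂ (x 0) (z 0) : ℂ) = 1 ∧
    (ContinuousLinearMap.id ℂ H - rankOne (z 0) (x 0)) (e 0) = 0 ∧
    ¬∃ Tinv : H →L[ℂ] H,
      Tinv.comp (ContinuousLinearMap.id ℂ H - rankOne (z 0) (x 0)) =
        ContinuousLinearMap.id ℂ H ∧
      (ContinuousLinearMap.id ℂ H - rankOne (z 0) (x 0)).comp Tinv =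
        ContinuousLinearMap.id ℂ H := by
  have he0 : ‖e 0‖ = 1 := e.orthonormal.1 0
  have hkernel : (ContinuousLinearMap.id ℂ H - rankOne (z 0) (x 0)) (e 0) = 0 := by
    rw [hx0, hz0]
    exact id_sub_rankOne_self_apply_self he0
  have hreconstruct (h : H) : HasSum (fun n => (inner ℂ (x n) h : ℂ) • z n) h := by
    have hcancel : (inner ℂ (x 1) h : ℂ) • z 1 + (inner ℂ (x 2) h : ℂ) • z 2 = 0 := by
      rw [hx1, hx2, hz1, hz2, smul_smul, smul_smul, ← add_smul]
      norm_num
    simpa [hcancel] using hasSum_inner_smul_of_hilbertBasis_insert_two e hx0 hz0 hx hz h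
  refine ⟨⟨_, _, isFrameOn_univ_of_hilbertBasis_insert_two e hx0 hx⟩,
    ⟨⟨_, _, isFrameOn_univ_of_hilbertBasis_insert_two e hz0 hz⟩,
      fun h => (Equiv.Set.univ ℕ).hasSum_iff.mpr (hreconstruct h)⟩,
    ?_, hkernel, ?_⟩
  · rw [hx0, hz0]
    exact inner_self_eq_one_of_norm_eq_one he0
  · rintro ⟨S, hS, -⟩
    exact ContinuousLinearMap.not_exists_comp_eq_id_of_apply_eq_zero (e.orthonormal.ne_zero 0)
      hkernel ⟨S, hS⟩

end
end
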